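/- In the setting of the parity-check matrix M (rows given by X^{i−1}·ħ mod f, i = 1,…,n) with f = h·g = g·ħ monic of degree n, g monic of degree n−k, and ħ of degree k with invertible leading coefficient ħ_k: the (n−k) × (n−k) upper-right submatrix of M is lower triangular with diagonal entries ħ_k, θ(ħ_k), …, θ^{n−k−1}(ħ_k), all invertible in A; consequently the right-most n−k columns of M are A-linearly independent and generate a free A-submodule of Aⁿ of rank n−k, which (when A is a finite commutative Frobenius ring) equals the dual code C^⊥, so the transposes of these columns form a parity check matrix of C. -/

import Mathlib

/-
For `i + k < n` the product `X^i ħ` has degree `i + k < n`, so it is its own remainder modulo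
`f` and row `i` of `M` is its coefficient vector. The leading coefficient of `X^i ħ` is
`θ^i(ħ_k)`, which gives the triangular block with unit diagonal, hence independent columns.
If `∑ wᵢ Xⁱ = u g` then `∑ wᵢ Xⁱ ħ = u f ≡ 0`, while reducing the left side row by row gives
`∑ⱼ (w M)ⱼ Xʲ`; so `w M = 0` and every column of `M` lies in `C^⊥`. The column span has
`|A|^(n-k)` elements and `C`, in bijection with the `u` of degree `< k`, has `|A|^k`, so the
Frobenius identity `|C| |C^⊥| = |A|^n` forces the span to be all of `C^⊥`.
-/

/-- The skew polynomial ring `R = A[X; θ, δ]`: a ring `R` together with a coefficient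
embedding `C : A →+* R` and an indeterminate `X` satisfying the commutation rule
`X * C a = C (θ a) * X + C (δ a)`, such that every element of `R` is, in a unique way,
a left polynomial `Σᵢ C aᵢ * X ^ i`. -/
structure SkewPolyRing (A : Type*) [Ring A] (θ : A →+* A) (δ : A →+ A)
    (R : Type*) [Ring R] where
  /-- embedding of the coefficient ring -/
  C : A →+* R
  /-- the indeterminate -/
  X : R
  /-- the commutation rule `X·a = θ(a)·X + δ(a)` -/
  X_mul : ∀ a : A, X * C a = C (θ a) * X + C (δ a)
  /-- every element of `R` is uniquely a left polynomial in `X` -/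
  equiv : (ℕ →₀ A) ≃ R
  equiv_apply : ∀ p : ℕ →₀ A, equiv p = p.sum fun i a => C a * X ^ i

namespace SkewPolyRing

variable {A : Type*} [Ring A] {θ : A →+* A} {δ : A →+ A} {R : Type*} [Ring R]

/-- the `i`-th coefficient of a skew polynomial -/
noncomputable def coeff (S : SkewPolyRing A θ δ R) (f : R) (i : ℕ) : A :=
  S.equiv.symm f i

/-- the degree of a skew polynomial (the degree of `0` is `⊥ = -∞`) -/
noncomputable def deg (S : SkewPolyRing A θ δ R) (f : R) : WithBot ℕ :=
  (S.equiv.symm f).support.max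

/-- the degree of a skew polynomial, as a natural number -/
noncomputable def natDeg (S : SkewPolyRing A θ δ R) (f : R) : ℕ :=
  (S.deg f).unbotD 0

/-- the leading coefficient of a skew polynomial -/
noncomputable def lc (S : SkewPolyRing A θ δ R) (f : R) : A :=
  S.coeff f (S.natDeg f)

end SkewPolyRing

open Submodule Set Matrix

theorem linearIndependent_of_lowerTriangular_of_isUnit_diag {A ι κ : Type*} [CommRing A]
    [Fintype κ] [LinearOrder κ] (v : κ → ι → A) (r : κ → ι)
    (htri : ∀ i j, i < j → v j (r i) = 0) (hdiag : ∀ i, IsUnit (v i (r i))) :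
    LinearIndependent A v := by
  let N : Matrix κ κ A := .of fun i j => v j (r i)
  have hN : N.IsLowerTriangular := fun i j hij => htri i j hij
  have hNunit : IsUnit N := (isUnit_iff_isUnit_det N).2 <| by
    rw [det_of_isLowerTriangular N hN]
    exact IsUnit.prod_iff.2 fun i _ => hdiag i
  exact .of_comp (LinearMap.funLeft A A r)
    (mulVec_injective_iff.1 (mulVec_injective_of_isUnit hNunit))

theorem LinearIndependent.natCard_span {A M ι : Type*} [Ring A] [Finite A] [AddCommGroup M]
    [Module A M] [Fintype ι] {v : ι → M} (hv : LinearIndependent A v) :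
    Nat.card (span A (range v)) = Nat.card A ^ Fintype.card ι := by
  rw [← Nat.card_congr hv.linearCombinationEquiv.toEquiv,
    Nat.card_congr Finsupp.equivFunOnFinite, Nat.card_fun, Nat.card_eq_fintype_card (α := ι)]

theorem coe_span_eq_of_orthogonal {A ι : Type*} [CommRing A] [Finite A] {n : ℕ}
    (D : Submodule A (Fin n → A)) {v : ι → Fin n → A} (horth : ∀ j, ∀ d ∈ D, v j ⬝ᵥ d = 0)
    (hcard : Nat.card {u : Fin n → A | ∀ d ∈ D, ∑ i, u i * d i = 0} ≤
      Nat.card (span A (range v))) :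
    (span A (range v) : Set (Fin n → A)) = {u | ∀ d ∈ D, ∑ i, u i * d i = 0} := by
  have hle : span A (range v) ≤ D.orthogonalBilin (dotProductBilin A A) :=
    span_le.2 <| range_subset_iff.2 fun j d hd => by simpa [dotProduct_comm] using horth j d hd
  refine eq_of_subset_of_ncard_le (fun u hu d hd => ?_) ?_ (toFinite _)
  · simpa [dotProduct, mul_comm] using hle hu d hd
  · rwa [← Nat.card_coe_set_eq, ← Nat.card_coe_set_eq]

namespace SkewPolyRing

variable {A : Type*} [Ring A] {θ : A →+* A} {δ : A →+ A} {R : Type*} [Ring R]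
  (S : SkewPolyRing A θ δ R)

/-- Additively `R` is `A[X]`, and `coeff`, `deg`, `natDeg` are those of this polynomial; this
gives access to the degree API of `Polynomial`. -/
noncomputable def toPoly (p : R) : Polynomial A :=
  .ofFinsupp (.ofCoeff (S.equiv.symm p))

lemma coeff_eq_toPoly_coeff (p : R) (i : ℕ) : S.coeff p i = (S.toPoly p).coeff i := rfl

lemma deg_eq_toPoly_degree (p : R) : S.deg p = (S.toPoly p).degree := rfl

lemma equiv_add (p q : ℕ →₀ A) : S.equiv (p + q) = S.equiv p + S.equiv q := by
  simp only [S.equiv_apply]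
  exact Finsupp.sum_add_index' (fun _ => by simp) (fun _ _ _ => by simp [add_mul])

noncomputable def coeffHom (i : ℕ) : R →+ A :=
  (Finsupp.applyAddHom i).comp (AddEquiv.mk' S.equiv S.equiv_add).symm.toAddMonoidHom

@[simp] lemma coeff_zero (i : ℕ) : S.coeff 0 i = 0 := (S.coeffHom i).map_zero

@[simp] lemma coeff_add (p q : R) (i : ℕ) : S.coeff (p + q) i = S.coeff p i + S.coeff q i :=
  (S.coeffHom i).map_add p q

@[simp] lemma coeff_sub (p q : R) (i : ℕ) : S.coeff (p - q) i = S.coeff p i - S.coeff q i :=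
  (S.coeffHom i).map_sub p q

lemma coeff_sum {ι : Type*} (s : Finset ι) (p : ι → R) (i : ℕ) :
    S.coeff (∑ j ∈ s, p j) i = ∑ j ∈ s, S.coeff (p j) i :=
  map_sum (S.coeffHom i) p s

lemma equiv_single (a : A) (i : ℕ) : S.equiv (Finsupp.single i a) = S.C a * S.X ^ i := by
  rw [S.equiv_apply, Finsupp.sum_single_index (by simp)]

lemma coeff_C_mul_X_pow (a : A) (i j : ℕ) :
    S.coeff (S.C a * S.X ^ i) j = if i = j then a else 0 := by
  rw [← S.equiv_single, coeff, Equiv.symm_apply_apply, Finsupp.single_apply]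

lemma ext_coeff {p q : R} (h : ∀ i, S.coeff p i = S.coeff q i) : p = q :=
  S.equiv.symm.injective (Finsupp.ext h)

@[elab_as_elim]
lemma induction_on {P : R → Prop} (p : R) (add : ∀ p q, P p → P q → P (p + q))
    (monomial : ∀ (a : A) (i : ℕ), P (S.C a * S.X ^ i)) : P p := by
  rw [← S.equiv.apply_symm_apply p]
  induction S.equiv.symm p using Finsupp.induction_linear with
  | zero => simpa [S.equiv_apply] using monomial 0 0
  | add f g hf hg => rw [S.equiv_add]; exact add _ _ hf hg
  | single i a => rw [S.equiv_single]; exact monomial a i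

lemma coeff_C_mul (a : A) (p : R) (j : ℕ) : S.coeff (S.C a * p) j = a * S.coeff p j := by
  induction p using S.induction_on with
  | add p q hp hq => rw [mul_add, coeff_add, coeff_add, hp, hq, mul_add]
  | monomial b i =>
    rw [← mul_assoc, ← map_mul, coeff_C_mul_X_pow, coeff_C_mul_X_pow]
    split_ifs <;> simp

lemma coeff_X_mul_succ (p : R) (j : ℕ) :
    S.coeff (S.X * p) (j + 1) = θ (S.coeff p j) + δ (S.coeff p (j + 1)) := by
  induction p using S.induction_on with
  | add p q hp hq => simp only [mul_add, coeff_add, hp, hq, map_add]; abel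
  | monomial b i =>
    rw [← mul_assoc, S.X_mul, add_mul, mul_assoc, ← pow_succ', coeff_add, coeff_C_mul_X_pow,
      coeff_C_mul_X_pow, coeff_C_mul_X_pow, coeff_C_mul_X_pow]
    split_ifs <;> simp_all

lemma deg_le_iff (p : R) (d : ℕ) : S.deg p ≤ d ↔ ∀ i, d < i → S.coeff p i = 0 := by
  exact_mod_cast (S.toPoly p).degree_le_iff_coeff_zero d

lemma deg_lt_iff (p : R) (m : ℕ) : S.deg p < m ↔ ∀ i, m ≤ i → S.coeff p i = 0 :=
  (S.toPoly p).degree_lt_iff_coeff_zero m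

lemma deg_eq_bot_iff {p : R} : S.deg p = ⊥ ↔ p = 0 := by
  rw [deg_eq_toPoly_degree, Polynomial.degree_eq_bot]
  exact ⟨fun h => S.ext_coeff fun i => by
      rw [coeff_zero, coeff_eq_toPoly_coeff, h, Polynomial.coeff_zero],
    fun h => Polynomial.ext fun i => by
      rw [← coeff_eq_toPoly_coeff, h, coeff_zero, Polynomial.coeff_zero]⟩

lemma deg_eq_natDeg {p : R} (hp : p ≠ 0) : S.deg p = S.natDeg p :=
  Polynomial.degree_eq_natDegree (p := S.toPoly p) fun h =>
    hp (S.deg_eq_bot_iff.1 (by rw [deg_eq_toPoly_degree, h, Polynomial.degree_zero]))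

@[simp] lemma deg_zero : S.deg (0 : R) = ⊥ := S.deg_eq_bot_iff.2 rfl

lemma coeff_ne_zero_of_deg_eq {p : R} {d : ℕ} (h : S.deg p = d) : S.coeff p d ≠ 0 :=
  Polynomial.coeff_ne_zero_of_eq_degree (p := S.toPoly p) h

lemma deg_eq_of_le_of_coeff_ne_zero {p : R} {d : ℕ} (hp : S.deg p ≤ d) (hd : S.coeff p d ≠ 0) :
    S.deg p = d :=
  Polynomial.degree_eq_of_le_of_coeff_ne_zero (p := S.toPoly p) hp hd

lemma deg_X_pow_mul_le {p : R} {e : ℕ} (hp : S.deg p ≤ e) (m : ℕ) :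
    S.deg (S.X ^ m * p) ≤ (m + e : ℕ) := by
  induction m with
  | zero => simpa using hp
  | succ m ih =>
    rw [S.deg_le_iff] at ih ⊢
    rintro (_ | j) hj
    · omega
    rw [pow_succ', mul_assoc, coeff_X_mul_succ, ih j (by omega), ih (j + 1) (by omega),
      map_zero, map_zero, add_zero]

lemma coeff_X_pow_mul_add {p : R} {e : ℕ} (hp : S.deg p ≤ e) (m : ℕ) :
    S.coeff (S.X ^ m * p) (m + e) = (⇑θ)^[m] (S.coeff p e) := by
  induction m with
  | zero => simp
  | succ m ih =>
    rw [pow_succ', mul_assoc, Nat.add_right_comm, coeff_X_mul_succ, ih,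
      (S.deg_le_iff _ _).1 (S.deg_X_pow_mul_le hp m) _ (by omega), map_zero, add_zero,
      Function.iterate_succ_apply']

noncomputable def ofVec {m : ℕ} (v : Fin m → A) : R :=
  ∑ i : Fin m, S.C (v i) * S.X ^ (i : ℕ)

lemma coeff_ofVec {m : ℕ} (v : Fin m → A) (j : ℕ) :
    S.coeff (S.ofVec v) j = if h : j < m then v ⟨j, h⟩ else 0 := by
  simp only [ofVec, coeff_sum, coeff_C_mul_X_pow]
  split_ifs with h
  · rw [Finset.sum_eq_single ⟨j, h⟩ (fun i _ hi => if_neg fun hij => hi (Fin.ext hij))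
      (by simp)]
    simp
  · exact Finset.sum_eq_zero fun i _ => if_neg (by omega)

@[simp] lemma coeff_ofVec_val {m : ℕ} (v : Fin m → A) (i : Fin m) :
    S.coeff (S.ofVec v) i = v i := by
  simp [coeff_ofVec]

lemma deg_ofVec_lt {m : ℕ} (v : Fin m → A) : S.deg (S.ofVec v) < m :=
  (S.deg_lt_iff _ _).2 fun j hj => by rw [coeff_ofVec, dif_neg (by omega)]

lemma ofVec_coeff {p : R} {m : ℕ} (hp : S.deg p < m) :
    S.ofVec (fun i : Fin m => S.coeff p i) = p :=
  S.ext_coeff fun j => by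
    rw [coeff_ofVec]
    split_ifs with h
    · rfl
    · exact ((S.deg_lt_iff _ _).1 hp j (by omega)).symm

lemma ofVec_injective {m : ℕ} : Function.Injective (S.ofVec : (Fin m → A) → R) :=
  fun v w h => funext fun i => by rw [← S.coeff_ofVec_val v, h, coeff_ofVec_val]

lemma ofVec_add {m : ℕ} (v w : Fin m → A) : S.ofVec (v + w) = S.ofVec v + S.ofVec w := by
  simp only [ofVec, Pi.add_apply, map_add, add_mul, Finset.sum_add_distrib]

lemma ofVec_smul {m : ℕ} (a : A) (v : Fin m → A) : S.ofVec (a • v) = S.C a * S.ofVec v := by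
  simp only [ofVec, Pi.smul_apply, smul_eq_mul, map_mul, Finset.mul_sum, mul_assoc]

lemma ofVec_vecMul {m n : ℕ} (w : Fin m → A) (M : Matrix (Fin m) (Fin n) A) :
    S.ofVec (Matrix.vecMul w M) = ∑ i, S.C (w i) * S.ofVec (M i) := by
  simp only [ofVec, Matrix.vecMul, dotProduct, map_sum, map_mul, Finset.sum_mul, Finset.mul_sum,
    mul_assoc]
  exact Finset.sum_comm

lemma coeff_mul {p : R} {m : ℕ} (hp : S.deg p < m) (q : R) (j : ℕ) :
    S.coeff (p * q) j = ∑ i : Fin m, S.coeff p i * S.coeff (S.X ^ (i : ℕ) * q) j := by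
  conv_lhs => rw [← S.ofVec_coeff hp]
  simp only [ofVec, Finset.sum_mul, mul_assoc, coeff_sum, coeff_C_mul]

lemma deg_mul_le {p q : R} {d e : ℕ} (hp : S.deg p ≤ d) (hq : S.deg q ≤ e) :
    S.deg (p * q) ≤ (d + e : ℕ) := by
  have hp' : S.deg p < (d + 1 : ℕ) := hp.trans_lt (by exact_mod_cast d.lt_succ_self)
  refine (S.deg_le_iff _ _).2 fun j hj => ?_
  rw [S.coeff_mul hp']
  refine Finset.sum_eq_zero fun i _ => ?_
  rw [(S.deg_le_iff _ _).1 (S.deg_X_pow_mul_le hq i) j (by omega), mul_zero]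

lemma coeff_mul_add {p q : R} {d e : ℕ} (hp : S.deg p ≤ d) (hq : S.deg q ≤ e) :
    S.coeff (p * q) (d + e) = S.coeff p d * (⇑θ)^[d] (S.coeff q e) := by
  have hp' : S.deg p < (d + 1 : ℕ) := hp.trans_lt (by exact_mod_cast d.lt_succ_self)
  rw [S.coeff_mul hp', Fin.sum_univ_castSucc, Finset.sum_eq_zero, zero_add]
  · simp [S.coeff_X_pow_mul_add hq]
  · intro i _
    rw [(S.deg_le_iff _ _).1 (S.deg_X_pow_mul_le hq _) _ (by simp), mul_zero]

lemma deg_mul_monic {q : R} {e : ℕ} (hq : S.deg q = e) (hq1 : S.coeff q e = 1) (p : R) :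
    S.deg (p * q) = S.deg p + e := by
  by_cases hp : p = 0
  · rw [hp, zero_mul, deg_zero, WithBot.bot_add]
  have hd := S.deg_eq_natDeg hp
  rw [hd, ← Nat.cast_add]
  refine S.deg_eq_of_le_of_coeff_ne_zero (S.deg_mul_le hd.le hq.le) ?_
  rw [S.coeff_mul_add hd.le hq.le, hq1, iterate_map_one, mul_one]
  exact S.coeff_ne_zero_of_deg_eq hd

lemma eq_zero_of_deg_mul_monic_lt {q : R} {e : ℕ} (hq : S.deg q = e) (hq1 : S.coeff q e = 1)
    {p : R} (h : S.deg (p * q) < e) : p = 0 := by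
  rw [S.deg_mul_monic hq hq1] at h
  by_contra hp
  rw [S.deg_eq_natDeg hp] at h
  norm_cast at h
  omega

lemma mul_left_injective_of_monic {q : R} {e : ℕ} (hq : S.deg q = e) (hq1 : S.coeff q e = 1) :
    Function.Injective (· * q) := fun p p' h => by
  refine sub_eq_zero.1 (S.eq_zero_of_deg_mul_monic_lt hq hq1 ?_)
  rw [sub_mul, sub_eq_zero.2 h, deg_zero]
  exact WithBot.bot_lt_coe e

noncomputable def degLtEquiv (m : ℕ) : (Fin m → A) ≃ {p : R // S.deg p < m} where
  toFun v := ⟨S.ofVec v, S.deg_ofVec_lt v⟩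
  invFun p i := S.coeff p i
  left_inv v := funext (S.coeff_ofVec_val v)
  right_inv p := Subtype.ext (S.ofVec_coeff p.2)

lemma natCard_deg_lt [Finite A] (m : ℕ) : Nat.card {p : R // S.deg p < m} = Nat.card A ^ m := by
  rw [← Nat.card_congr (S.degLtEquiv m), Nat.card_fun, Nat.card_fin]

lemma deg_mul_monic_lt_iff {g : R} {e : ℕ} (hg : S.deg g = e) (hg1 : S.coeff g e = 1) (u : R)
    (k : ℕ) : S.deg (u * g) < (k + e : ℕ) ↔ S.deg u < k := by
  rw [S.deg_mul_monic hg hg1]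
  induction S.deg u using WithBot.recBotCoe with
  | bot => simp
  | coe d => simp only [Nat.cast_withBot, ← WithBot.coe_add, WithBot.coe_lt_coe]; omega

/-- The vector representation of the code `Rg/Rf`, for `f` of degree `n`. -/
def vecCode (g : R) (n : ℕ) : Submodule A (Fin n → A) where
  carrier := {w | ∃ u, S.ofVec w = u * g}
  add_mem' := by
    rintro v w ⟨u, hu⟩ ⟨u', hu'⟩
    exact ⟨u + u', by rw [ofVec_add, hu, hu', add_mul]⟩
  zero_mem' := ⟨0, by simp [ofVec]⟩
  smul_mem' := by
    rintro a w ⟨u, hu⟩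
    exact ⟨S.C a * u, by rw [ofVec_smul, hu, mul_assoc]⟩

lemma natCard_vecCode [Finite A] {g : R} {e k n : ℕ} (hg : S.deg g = e) (hg1 : S.coeff g e = 1)
    (hn : k + e = n) : Nat.card (S.vecCode g n) = Nat.card A ^ k := by
  subst hn
  let Φ : {u : R // S.deg u < k} → S.vecCode g (k + e) := fun u =>
    ⟨fun i => S.coeff (u * g) i, u, S.ofVec_coeff ((S.deg_mul_monic_lt_iff hg hg1 u k).2 u.2)⟩
  have hΦ : Function.Bijective Φ := by
    refine ⟨fun u u' h => Subtype.ext (S.mul_left_injective_of_monic hg hg1 ?_), ?_⟩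
    · have h' := congrArg (S.ofVec ∘ Subtype.val) h
      simp only [Function.comp_apply, Φ] at h'
      rwa [S.ofVec_coeff ((S.deg_mul_monic_lt_iff hg hg1 u k).2 u.2),
        S.ofVec_coeff ((S.deg_mul_monic_lt_iff hg hg1 u' k).2 u'.2)] at h'
    · rintro ⟨w, u, hu⟩
      have hu_deg : S.deg u < k := (S.deg_mul_monic_lt_iff hg hg1 u k).1 (hu ▸ S.deg_ofVec_lt w)
      exact ⟨⟨u, hu_deg⟩, Subtype.ext (funext fun i => by simp [Φ, ← hu])⟩
  rw [← Nat.card_congr (Equiv.ofBijective Φ hΦ), natCard_deg_lt]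

lemma coeff_eq_of_eq_mul_add {f p q : R} {n : ℕ} (hf : S.deg f = n) (hf1 : S.coeff f n = 1)
    (hp : S.deg p < n) {v : Fin n → A} (h : p = q * f + S.ofVec v) (j : Fin n) :
    v j = S.coeff p j := by
  have hq : q = 0 := S.eq_zero_of_deg_mul_monic_lt hf hf1 <| (S.deg_lt_iff _ _).2 fun i hi => by
    rw [eq_sub_of_add_eq h.symm, coeff_sub, (S.deg_lt_iff _ _).1 hp i hi,
      (S.deg_lt_iff _ _).1 (S.deg_ofVec_lt v) i hi, sub_zero]
  rw [h, hq, zero_mul, zero_add, coeff_ofVec_val]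

lemma vecMul_eq_zero_of_mem_vecCode {f g hbar : R} {n : ℕ} (hf : S.deg f = n)
    (hf1 : S.coeff f n = 1) (hgh : f = g * hbar) {M : Matrix (Fin n) (Fin n) A}
    (hM : ∀ i : Fin n, ∃ q, S.X ^ (i : ℕ) * hbar = q * f + S.ofVec (M i)) {w : Fin n → A}
    (hw : w ∈ S.vecCode g n) : Matrix.vecMul w M = 0 := by
  obtain ⟨u, hu⟩ := hw
  choose q hq using hM
  -- `ofVec (w ᵥ* M)` is `ofVec w * ħ = u * f` reduced modulo `f`, hence `0`.
  have hsplit :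
      S.ofVec w * hbar = (∑ i, S.C (w i) * q i) * f + S.ofVec (Matrix.vecMul w M) := by
    rw [ofVec_vecMul, ofVec, Finset.sum_mul, Finset.sum_mul, ← Finset.sum_add_distrib]
    refine Finset.sum_congr rfl fun i _ => ?_
    rw [mul_assoc, hq, mul_add, mul_assoc]
  have hdiv : S.ofVec (Matrix.vecMul w M) = (u - ∑ i, S.C (w i) * q i) * f := by
    have huf : u * f = S.ofVec w * hbar := by rw [hu, mul_assoc, hgh]
    rw [sub_mul, huf, hsplit, add_sub_cancel_left]
  have hzero : u - ∑ i, S.C (w i) * q i = 0 :=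
    S.eq_zero_of_deg_mul_monic_lt hf hf1 (hdiv ▸ S.deg_ofVec_lt _)
  apply S.ofVec_injective
  rw [hdiv, hzero, zero_mul]
  simp [ofVec]

end SkewPolyRing

theorem parityCheck_from_columns
    {A R : Type*} [CommRing A] [Finite A] [Ring R]
    (θ : A →+* A) (δ : A →+ A)
    (S : SkewPolyRing A θ δ R)
    (f g hbar : R) (n k : ℕ) (hkn : k ≤ n)
    (hdegf : S.deg f = (n : WithBot ℕ)) (hmf : S.coeff f n = 1)
    (h2 : f = g * hbar)
    (hdegg : S.deg g = ((n - k : ℕ) : WithBot ℕ)) (hmg : S.coeff g (n - k) = 1)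
    (hdeghbar : S.deg hbar = (k : WithBot ℕ))
    (hlc : IsUnit (S.coeff hbar k))
    (M : Matrix (Fin n) (Fin n) A)
    (hM : ∀ i : Fin n, ∃ q : R,
      S.X ^ (i : ℕ) * hbar = q * f + ∑ j : Fin n, S.C (M i j) * S.X ^ (j : ℕ))
    (C : Set (Fin n → A))
    (hC : C = {w | ∃ u : R, (∑ i : Fin n, S.C (w i) * S.X ^ (i : ℕ)) = u * g}) :
    -- the upper-right (n-k)×(n-k) submatrix is lower triangular …
    (∀ i j : Fin (n - k), (i : ℕ) < (j : ℕ) →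
      M (Fin.castLE (by omega) i) (Fin.cast (by omega) (j.addNat k)) = 0) ∧
    -- … with diagonal entries θ^i(ħ_k), …
    (∀ i : Fin (n - k),
      M (Fin.castLE (by omega) i) (Fin.cast (by omega) (i.addNat k))
        = (⇑θ)^[(i : ℕ)] (S.coeff hbar k)) ∧
    -- … which are invertible in A;
    (∀ i : Fin (n - k),
      IsUnit (M (Fin.castLE (by omega) i) (Fin.cast (by omega) (i.addNat k)))) ∧
    -- the right-most n-k columns of M are A-linearly independent …
    LinearIndependent A
      (fun j : Fin (n - k) => fun i : Fin n => M i (Fin.cast (by omega) (j.addNat k))) ∧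
    -- … and, when A is Frobenius, they generate the dual code C^⊥.
    ((∀ D : Submodule A (Fin n → A),
        Nat.card D * Nat.card {v : Fin n → A | ∀ d ∈ D, ∑ i, v i * d i = 0}
          = Nat.card A ^ n) →
      (Submodule.span A
          (Set.range fun j : Fin (n - k) =>
            fun i : Fin n => M i (Fin.cast (by omega) (j.addNat k))) :
          Set (Fin n → A))
        = {v : Fin n → A | ∀ c ∈ C, ∑ i, v i * c i = 0}) := by
  have hrow (i : Fin (n - k)) (j : Fin n) :
      M (Fin.castLE (Nat.sub_le n k) i) j = S.coeff (S.X ^ (i : ℕ) * hbar) j := by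
    obtain ⟨q, hq⟩ := hM (Fin.castLE (Nat.sub_le n k) i)
    refine S.coeff_eq_of_eq_mul_add hdegf hmf ?_ hq j
    exact (S.deg_X_pow_mul_le hdeghbar.le i).trans_lt (by norm_cast; omega)
  have htri (i j : Fin (n - k)) (hij : (i : ℕ) < j) :
      M (Fin.castLE (Nat.sub_le n k) i) (Fin.cast (Nat.sub_add_cancel hkn) (j.addNat k)) = 0 := by
    rw [hrow]
    exact (S.deg_le_iff _ _).1 (S.deg_X_pow_mul_le hdeghbar.le i) _ (by simp; omega)
  have hdiag (i : Fin (n - k)) :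
      M (Fin.castLE (Nat.sub_le n k) i) (Fin.cast (Nat.sub_add_cancel hkn) (i.addNat k)) =
        (⇑θ)^[(i : ℕ)] (S.coeff hbar k) := by
    simpa [hrow] using S.coeff_X_pow_mul_add hdeghbar.le i
  have hunit (i : Fin (n - k)) :
      IsUnit (M (Fin.castLE (Nat.sub_le n k) i)
        (Fin.cast (Nat.sub_add_cancel hkn) (i.addNat k))) := by
    rw [hdiag, ← RingHom.coe_pow]
    exact hlc.map _
  have hli := linearIndependent_of_lowerTriangular_of_isUnit_diag
    (fun j : Fin (n - k) => fun i : Fin n => M i (Fin.cast (Nat.sub_add_cancel hkn) (j.addNat k)))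
    (Fin.castLE (Nat.sub_le n k)) htri hunit
  refine ⟨htri, hdiag, hunit, hli, fun hFrob => ?_⟩
  subst hC
  refine coe_span_eq_of_orthogonal (S.vecCode g n) (fun j d hd => ?_) (le_of_eq ?_)
  · rw [dotProduct_comm]
    exact congrFun (S.vecMul_eq_zero_of_mem_vecCode hdegf hmf h2 hM hd) _
  · have hdual := hFrob (S.vecCode g n)
    rw [S.natCard_vecCode hdegg hmg (Nat.add_sub_cancel' hkn)] at hdual
    rw [hli.natCard_span, Fintype.card_fin]
    refine Nat.eq_of_mul_eq_mul_left (pow_pos (Nat.card_pos (α := A)) k) ?_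
    rw [hdual, ← pow_add, Nat.add_sub_cancel' hkn]
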